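/- Let L be a first-order language all of whose symbols are function symbols, with no nullary and no unary function symbols and only finitely many function symbols in total, let 𝔄 be an L-structure with underlying set A, let a : ℕ → A, and let n ∈ ℕ. If 𝔄 is Ramsey below a, then for every b ≤ a and every X ⊆ Aⁿ there exists c ≤ b such that [FR(c)]ⁿ_< is either contained in X or disjoint from X, where [FR(c)]ⁿ_< = { (t₁^𝔄[c], …, tₙ^𝔄[c]) : t₁, …, tₙ orderly terms with t₁ < ⋯ < tₙ }. -/

import Mathlib

open Function Set

universe u v w

/-- Terms of a purely functional first-order language whose function symbols
of arity `n` form the type `F n`, with variables indexed by `ℕ`. -/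
inductive Tm (F : ℕ → Type u) : Type u
  | var : ℕ → Tm F
  | func : {n : ℕ} → F n → (Fin n → Tm F) → Tm F

namespace Tm

variable {F : ℕ → Type u} {A : Type v} {β : Type w}

/-- The list of (indices of) variables occurring in a term, from left to right. -/
def varList : Tm F → List ℕ
  | .var i => [i]
  | .func (n := n) _ ts => (List.finRange n).flatMap fun i => (ts i).varList

/-- A term is *orderly* if the indices of the variables occurring in it,
read from left to right, are strictly increasing. -/
def Orderly (t : Tm F) : Prop := t.varList.Chain' (· < ·)

/-- `TermLT s t` iff the index of the last variable of `s` is less than the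
index of the first variable of `t`. -/
def TermLT (s t : Tm F) : Prop :=
  ∃ i j, s.varList.getLast? = some i ∧ t.varList.head? = some j ∧ i < j

/-- An infinite sequence of orderly terms is *admissible* iff it is increasing
with respect to `TermLT`. -/
def Admissible (ts : ℕ → Tm F) : Prop :=
  (∀ i, (ts i).Orderly) ∧ ∀ i, TermLT (ts i) (ts (i + 1))

/-- `s.subst σ` replaces each variable `vᵢ` in `s` by `σ i`. -/
def subst (σ : ℕ → Tm F) : Tm F → Tm F
  | .var i => σ i
  | .func f ts => .func f fun i => (ts i).subst σ

/-- Interpretation of a term in a structure with underlying set `A` whose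
interpretation of the function symbols is `I`, under the assignment `a`. -/
def realize (I : ∀ n, F n → (Fin n → A) → A) (a : ℕ → A) : Tm F → A
  | .var i => a i
  | .func (n := n) f ts => I n f fun i => (ts i).realize I a

end Tm

section General

variable {F : ℕ → Type u} {A : Type v} {β : Type w}

/-- `b` is a reduction of `a` (with respect to the algebra `(A, I)`). -/
def SeqReduction (I : ∀ n, F n → (Fin n → A) → A) (b a : ℕ → A) : Prop :=
  ∃ ts : ℕ → Tm F, Tm.Admissible ts ∧ ∀ i, b i = (ts i).realize I a

/-- The set of finite reductions of `a`. -/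
def FR (I : ∀ n, F n → (Fin n → A) → A) (a : ℕ → A) : Set A :=
  { x | ∃ t : Tm F, t.Orderly ∧ x = t.realize I a }

/-- `(A, I)` is a Ramsey algebra. -/
def RamseyAlg (I : ∀ n, F n → (Fin n → A) → A) : Prop :=
  ∀ (a : ℕ → A) (X : Set A),
    ∃ b, SeqReduction I b a ∧ (FR I b ⊆ X ∨ FR I b ∩ X = ∅)

/-- `(A, I)` is Ramsey below `a`. -/
def RamseyBelow (I : ∀ n, F n → (Fin n → A) → A) (a : ℕ → A) : Prop :=
  ∀ b, SeqReduction I b a → ∀ X : Set A,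
    ∃ c, SeqReduction I c b ∧ (FR I c ⊆ X ∨ FR I c ∩ X = ∅)

/-- An increasing tuple `t₁ < t₂ < ⋯ < tₙ` of orderly terms. -/
def OrdTuple {n : ℕ} (t : Fin n → Tm F) : Prop :=
  (∀ i, (t i).Orderly) ∧ ∀ i j : Fin n, i < j → Tm.TermLT (t i) (t j)

/-- `𝒜` (as a function on orderly terms) is an orderly algebra. -/
def IsOrderlyAlg (𝒜 : Tm F → β) : Prop :=
  ∀ (n : ℕ) (f : F n) (t t' : Fin n → Tm F), OrdTuple t → OrdTuple t' →
    (∀ k, 𝒜 (t k) = 𝒜 (t' k)) → 𝒜 (.func f t) = 𝒜 (.func f t')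

/-- The universe of an orderly algebra: its range on orderly terms. -/
def OAUniv (𝒜 : Tm F → β) : Set β := 𝒜 '' { t | t.Orderly }

/-- `ℬ` is a reduction of the orderly algebra `𝒜` (as functions on orderly terms). -/
def OAReduction (ℬ 𝒜 : Tm F → β) : Prop :=
  ∃ ts : ℕ → Tm F, Tm.Admissible ts ∧ ∀ s : Tm F, s.Orderly → ℬ s = 𝒜 (s.subst ts)

/-- `ℬ` is homogeneous for `X`. -/
def Homog (ℬ : Tm F → β) (X : Set β) : Prop :=
  OAUniv ℬ ⊆ X ∨ OAUniv ℬ ∩ X = ∅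

/-- An orderly algebra is weakly Ramsey. -/
def WeaklyRamseyOA (𝒜 : Tm F → β) : Prop :=
  ∀ X ⊆ OAUniv 𝒜, ∃ ℬ, OAReduction ℬ 𝒜 ∧ Homog ℬ X

/-- An orderly algebra is Ramsey. -/
def RamseyOA (𝒜 : Tm F → β) : Prop :=
  ∀ ℬ, OAReduction ℬ 𝒜 → ∀ X ⊆ OAUniv 𝒜, ∃ 𝒞, OAReduction 𝒞 ℬ ∧ Homog 𝒞 X

/-- The orderly algebra induced from the algebra `(A, I)` by the sequence `a`. -/
def inducedOA (I : ∀ n, F n → (Fin n → A) → A) (a : ℕ → A) : Tm F → A :=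
  fun t => t.realize I a

/-- `[FR(c)]ⁿ_<` : increasing `n`-tuples of finite reductions of `c`. -/
def FRtuple (I : ∀ n, F n → (Fin n → A) → A) (n : ℕ) (c : ℕ → A) : Set (Fin n → A) :=
  { x | ∃ t : Fin n → Tm F, OrdTuple t ∧ ∀ i, x i = (t i).realize I c }

/-- `‖𝒞‖ⁿ_<` for an orderly algebra `𝒞`. -/
def OATuple (n : ℕ) (𝒞 : Tm F → β) : Set (Fin n → β) :=
  { x | ∃ t : Fin n → Tm F, OrdTuple t ∧ ∀ i, x i = 𝒞 (t i) }

/-- The basic set `[n, a]` of the preorder with approximations `(ᵂA, ≤)`. -/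
def Approx (I : ∀ n, F n → (Fin n → A) → A) (n : ℕ) (a : ℕ → A) : Set (ℕ → A) :=
  { b | SeqReduction I b a ∧ ∀ i < n, b i = a i }

/-- The natural topology on `ᵂA`, generated by the sets `[n, a]`. -/
def natTop (I : ∀ n, F n → (Fin n → A) → A) : TopologicalSpace (ℕ → A) :=
  TopologicalSpace.generateFrom { S | ∃ n a, S = Approx I n a }

/-- A subset `X ⊆ ᵂA` is Ramsey. -/
def RamseySet (I : ∀ n, F n → (Fin n → A) → A) (X : Set (ℕ → A)) : Prop :=
  ∀ (n : ℕ) (a : ℕ → A), ∃ b ∈ Approx I n a,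
    Approx I n b ⊆ X ∨ Approx I n b ∩ X = ∅

/-- `X` has the property of Baire in the natural topology:
its symmetric difference with some open set is meager. -/
def HasBaireProperty (I : ∀ n, F n → (Fin n → A) → A) (X : Set (ℕ → A)) : Prop :=
  ∃ U : Set (ℕ → A), @IsOpen _ (natTop I) U ∧ @IsMeagre _ (natTop I) (symmDiff X U)

end General

/-- The language with a single binary function symbol. -/
inductive BinF : ℕ → Type
  | f : BinF 2

/-- Application of the binary function symbol: the term `f s t`. -/
def fapp (s t : Tm BinF) : Tm BinF := .func BinF.f ![s, t]

/-- The interpretation of the single binary function symbol by a binary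
operation `g` on `A`. -/
def binI {A : Type v} (g : A → A → A) : ∀ n, BinF n → (Fin n → A) → A
  | _, BinF.f, args => g (args 0) (args 1)

/-- The pair `(tˣ, tʸ)`: `(vᵢˣ, vᵢʸ) = (v_{2i}, v_{2i+1})` and
`((f s t)ˣ, (f s t)ʸ) = (f sˣ sʸ, f tˣ tʸ)`. -/
def xyPair : Tm BinF → Tm BinF × Tm BinF
  | .var i => (.var (2 * i), .var (2 * i + 1))
  | .func BinF.f ts =>
      (fapp (xyPair (ts 0)).1 (xyPair (ts 0)).2, fapp (xyPair (ts 1)).1 (xyPair (ts 1)).2)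

/-- The orderly algebra `♯𝒜`, `♯𝒜(t) = (𝒜(tˣ), 𝒜(tʸ))`. -/
def sharpOA {β : Type w} (𝒜 : Tm BinF → β) : Tm BinF → β × β :=
  fun t => (𝒜 (xyPair t).1, 𝒜 (xyPair t).2)

/-!
Induction on `n`. For the step from `n` to `n + 1`, build `b = c₀ ≥ c₁ ≥ ⋯` where `c_{k+1}` keeps
the first `k` entries of `c_k`, and its `k`-th tail is (by the induction hypothesis, applied
finitely often) homogeneous for the section `{y | (x, y) ∈ X}` at every value `x` over `c_k` of an
orderly term in the first `k` variables. There are only finitely many such terms because there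
are finitely many symbols, none of them nullary or unary. The diagonal sequence `c` is a reduction
of `b` whose tails decide, for each `x ∈ FR(c)`, whether every or no increasing `n`-tuple beyond
`x` lies in the section at `x`. Colouring `x` by this answer, Ramsey below `a` gives `c' ≤ c`
with `FR(c')` monochromatic, and then `[FR(c')]ⁿ⁺¹_<` lies inside or outside `X`.
-/

theorem Nat.strictMonoOn_sub_Ici (k : ℕ) : StrictMonoOn (· - k) (Set.Ici k) :=
  fun _ hx _ _ hxy => Nat.sub_lt_sub_right hx hxy

namespace Tm

variable {F : ℕ → Type u} {A : Type v}

theorem mem_varList_func {n : ℕ} {f : F n} {ts : Fin n → Tm F} {v : ℕ} :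
    v ∈ (func f ts).varList ↔ ∃ j, v ∈ (ts j).varList := by
  simp [varList]

theorem realize_subst (I : ∀ n, F n → (Fin n → A) → A) (c : ℕ → A) (σ : ℕ → Tm F)
    (t : Tm F) : (t.subst σ).realize I c = t.realize I fun i => (σ i).realize I c := by
  induction t with
  | var i => rfl
  | func f ts ih => exact congrArg (I _ f) (funext ih)

theorem realize_congr (I : ∀ n, F n → (Fin n → A) → A) {c d : ℕ → A} {t : Tm F}
    (h : ∀ v ∈ t.varList, c v = d v) : t.realize I c = t.realize I d := by
  induction t with
  | var i => exact h i (List.mem_singleton_self i)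
  | func f ts ih =>
    exact congrArg (I _ f) (funext fun j => ih j fun v hv => h v (mem_varList_func.2 ⟨j, hv⟩))

theorem varList_subst (σ : ℕ → Tm F) (t : Tm F) :
    (t.subst σ).varList = t.varList.flatMap fun i => (σ i).varList := by
  induction t with
  | var i => simp [subst, varList]
  | func f ts ih => simp only [subst, varList, List.flatMap_assoc, ih]

theorem varList_subst_var (g : ℕ → ℕ) (t : Tm F) :
    (t.subst fun i => var (g i)).varList = t.varList.map g := by
  rw [varList_subst, List.map_eq_flatMap]
  rfl

theorem realize_subst_sub (I : ∀ n, F n → (Fin n → A) → A) (c : ℕ → A) {k : ℕ} {t : Tm F}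
    (hk : ∀ v ∈ t.varList, k ≤ v) :
    (t.subst fun v => var (v - k)).realize I (fun j => c (k + j)) = t.realize I c := by
  rw [realize_subst]
  exact realize_congr I fun v hv => by rw [realize, Nat.add_sub_cancel' (hk v hv)]

theorem varList_ne_nil [IsEmpty (F 0)] (t : Tm F) : t.varList ≠ [] := by
  induction t with
  | var i => exact List.cons_ne_nil i []
  | @func n f ts ih =>
    rcases Nat.eq_zero_or_pos n with rfl | hn
    · exact isEmptyElim f
    obtain ⟨v, hv⟩ := List.exists_mem_of_ne_nil _ (ih ⟨0, hn⟩)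
    exact List.ne_nil_of_mem (mem_varList_func.2 ⟨_, hv⟩)

theorem orderly_iff_pairwise {t : Tm F} : t.Orderly ↔ t.varList.Pairwise (· < ·) :=
  List.isChain_iff_pairwise

theorem orderly_var (i : ℕ) : (var i : Tm F).Orderly :=
  List.isChain_singleton i

theorem Orderly.subst_var {g : ℕ → ℕ} {S : Set ℕ} (hg : StrictMonoOn g S) {t : Tm F}
    (hS : ∀ v ∈ t.varList, v ∈ S) (ht : t.Orderly) : (t.subst fun i => var (g i)).Orderly := by
  rw [orderly_iff_pairwise, varList_subst_var, List.pairwise_map]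
  exact (orderly_iff_pairwise.1 ht).imp_of_mem fun hx hy hxy => hg (hS _ hx) (hS _ hy) hxy

theorem TermLT.subst_var {g : ℕ → ℕ} {S : Set ℕ} (hg : StrictMonoOn g S) {s t : Tm F}
    (hs : ∀ v ∈ s.varList, v ∈ S) (ht : ∀ v ∈ t.varList, v ∈ S) (hst : TermLT s t) :
    TermLT (s.subst fun i => var (g i)) (t.subst fun i => var (g i)) := by
  obtain ⟨i, j, hi, hj, hij⟩ := hst
  refine ⟨g i, g j, ?_, ?_, hg (hs i (List.mem_of_mem_getLast? hi))
    (ht j (List.mem_of_mem_head? hj)) hij⟩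
  · rw [varList_subst_var, List.getLast?_map, hi, Option.map_some]
  · rw [varList_subst_var, List.head?_map, hj, Option.map_some]

theorem admissible_var {g : ℕ → ℕ} (hg : StrictMono g) :
    Admissible fun i => (var (g i) : Tm F) :=
  ⟨fun _ => orderly_var _, fun i => ⟨g i, g (i + 1), rfl, rfl, hg i.lt_add_one⟩⟩

def iterSubst (σ : ℕ → ℕ → Tm F) (m : ℕ) : ℕ → ℕ → Tm F
  | 0 => .var
  | j + 1 => fun i => (σ (m + j) i).subst (iterSubst σ m j)

variable [IsEmpty (F 0)]

theorem termLT_of_forall {s t : Tm F} (h : ∀ x ∈ s.varList, ∀ y ∈ t.varList, x < y) :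
    TermLT s t :=
  ⟨_, _, List.getLast?_eq_some_getLast (varList_ne_nil s),
    List.head?_eq_some_head (varList_ne_nil t), h _ (List.getLast_mem _) _ (List.head_mem _)⟩

theorem TermLT.lt_of_mem {s t : Tm F} (hs : s.Orderly) (ht : t.Orderly) (hst : TermLT s t)
    {x y : ℕ} (hx : x ∈ s.varList) (hy : y ∈ t.varList) : x < y := by
  obtain ⟨i, j, hi, hj, hij⟩ := hst
  rw [List.getLast?_eq_some_getLast (varList_ne_nil s), Option.some_inj] at hi
  rw [List.head?_eq_some_head (varList_ne_nil t), Option.some_inj] at hj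
  have hxi : x ≤ i := hi ▸ ((orderly_iff_pairwise.1 hs).imp le_of_lt).rel_getLast hx
  have hjy : j ≤ y := hj ▸ ((orderly_iff_pairwise.1 ht).imp le_of_lt).rel_head hy
  omega

theorem Admissible.lt_of_mem {σ : ℕ → Tm F} (hσ : Admissible σ) {i j : ℕ} (hij : i < j)
    {x y : ℕ} (hx : x ∈ (σ i).varList) (hy : y ∈ (σ j).varList) : x < y := by
  induction j, hij using Nat.le_induction generalizing y with
  | base => exact (hσ.2 i).lt_of_mem (hσ.1 i) (hσ.1 _) hx hy
  | succ j hij ih =>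
    have hz := List.head_mem (varList_ne_nil (σ j))
    exact (ih hz).trans ((hσ.2 j).lt_of_mem (hσ.1 j) (hσ.1 _) hz hy)

theorem Orderly.subst {σ : ℕ → Tm F} (hσ : Admissible σ) {t : Tm F} (ht : t.Orderly) :
    (t.subst σ).Orderly := by
  rw [orderly_iff_pairwise, varList_subst, List.pairwise_flatMap]
  exact ⟨fun i _ => orderly_iff_pairwise.1 (hσ.1 i),
    (orderly_iff_pairwise.1 ht).imp fun hij _ hx _ hy => hσ.lt_of_mem hij hx hy⟩

theorem TermLT.subst {σ : ℕ → Tm F} (hσ : Admissible σ) {s t : Tm F} (hs : s.Orderly)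
    (ht : t.Orderly) (hst : TermLT s t) : TermLT (s.subst σ) (t.subst σ) := by
  refine termLT_of_forall fun x hx y hy => ?_
  rw [varList_subst, List.mem_flatMap] at hx hy
  obtain ⟨i, hi, hx⟩ := hx
  obtain ⟨j, hj, hy⟩ := hy
  exact hσ.lt_of_mem (hst.lt_of_mem hs ht hi hj) hx hy

theorem Admissible.subst {σ ts : ℕ → Tm F} (hσ : Admissible σ) (hts : Admissible ts) :
    Admissible fun i => (ts i).subst σ :=
  ⟨fun i => (hts.1 i).subst hσ, fun i => (hts.2 i).subst hσ (hts.1 i) (hts.1 _)⟩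

end Tm

section Reduction

variable {F : ℕ → Type u} {A : Type v} {I : ∀ n, F n → (Fin n → A) → A}

theorem FRtuple_nonempty (n : ℕ) (c : ℕ → A) : (FRtuple I n c).Nonempty :=
  ⟨fun i => c i, fun i => Tm.var i,
    ⟨fun i => Tm.orderly_var i, fun i j hij => ⟨i, j, rfl, rfl, hij⟩⟩, fun _ => rfl⟩

theorem mem_FR_of_mem_FRtuple {n : ℕ} {c : ℕ → A} {x : Fin n → A} (hx : x ∈ FRtuple I n c)
    (i : Fin n) : x i ∈ FR I c :=
  let ⟨t, ht, hx⟩ := hx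
  ⟨t i, ht.1 i, hx i⟩

theorem seqReduction_comp_strictMono (c : ℕ → A) {g : ℕ → ℕ} (hg : StrictMono g) :
    SeqReduction I (fun i => c (g i)) c :=
  ⟨_, Tm.admissible_var hg, fun _ => rfl⟩

theorem seqReduction_refl (c : ℕ → A) : SeqReduction I c c :=
  seqReduction_comp_strictMono c strictMono_id

theorem seqReduction_shift (c : ℕ → A) (k : ℕ) : SeqReduction I (fun j => c (k + j)) c :=
  seqReduction_comp_strictMono c (g := (k + ·)) fun _ _ h => Nat.add_lt_add_left h k

theorem seqReduction_shift_of_le (c : ℕ → A) {k k' : ℕ} (hk : k ≤ k') :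
    SeqReduction I (fun j => c (k' + j)) (fun j => c (k + j)) := by
  simpa only [← Nat.add_assoc, Nat.add_sub_cancel' hk] using
    seqReduction_shift (I := I) (fun j => c (k + j)) (k' - k)

variable [IsEmpty (F 0)]

theorem SeqReduction.trans {d c b : ℕ → A} (hdc : SeqReduction I d c)
    (hcb : SeqReduction I c b) : SeqReduction I d b := by
  obtain ⟨ts, hts, hd⟩ := hdc
  obtain ⟨ss, hss, rfl⟩ : ∃ ss, Tm.Admissible ss ∧ c = fun i => (ss i).realize I b :=
    hcb.imp fun _ h => ⟨h.1, funext h.2⟩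
  exact ⟨_, hss.subst hts, fun i => (hd i).trans (Tm.realize_subst I b ss (ts i)).symm⟩

theorem OrdTuple.subst {n : ℕ} {t : Fin n → Tm F} {σ : ℕ → Tm F} (ht : OrdTuple t)
    (hσ : Tm.Admissible σ) : OrdTuple fun i => (t i).subst σ :=
  ⟨fun i => (ht.1 i).subst hσ, fun i j hij => (ht.2 i j hij).subst hσ (ht.1 i) (ht.1 j)⟩

theorem SeqReduction.FRtuple_subset {n : ℕ} {c b : ℕ → A} (hcb : SeqReduction I c b) :
    FRtuple I n c ⊆ FRtuple I n b := by
  obtain ⟨ts, hts, hc⟩ := hcb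
  rintro x ⟨t, ht, hx⟩
  refine ⟨fun i => (t i).subst ts, ht.subst hts, fun i => ?_⟩
  rw [hx i, Tm.realize_subst]
  exact Tm.realize_congr I fun v _ => hc v

end Reduction

structure FixingReduction {F : ℕ → Type u} {A : Type v} (I : ∀ n, F n → (Fin n → A) → A)
    (k : ℕ) (ts : ℕ → Tm F) (c b : ℕ → A) : Prop where
  admissible : Tm.Admissible ts
  eq_realize : ∀ i, c i = (ts i).realize I b
  eq_var : ∀ i < k, ts i = .var i
  le_of_mem : ∀ i, k ≤ i → ∀ v ∈ (ts i).varList, k ≤ v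

namespace FixingReduction

variable {F : ℕ → Type u} {A : Type v} {I : ∀ n, F n → (Fin n → A) → A} {k : ℕ}
  {ts : ℕ → Tm F} {b c d : ℕ → A}

theorem seqReduction (h : FixingReduction I k ts c b) : SeqReduction I c b :=
  ⟨ts, h.admissible, h.eq_realize⟩

theorem eq_of_lt (h : FixingReduction I k ts c b) {i : ℕ} (hi : i < k) : c i = b i := by
  rw [h.eq_realize, h.eq_var i hi]
  rfl

theorem id (k : ℕ) (b : ℕ → A) : FixingReduction I k (fun i => .var i) b b where
  admissible := Tm.admissible_var strictMono_id
  eq_realize _ := rfl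
  eq_var _ _ := rfl
  le_of_mem _ hi _ hv := List.mem_singleton.1 hv ▸ hi

theorem mono (h : FixingReduction I k ts c b) {k₀ : ℕ} (hk : k₀ ≤ k) :
    FixingReduction I k₀ ts c b where
  admissible := h.admissible
  eq_realize := h.eq_realize
  eq_var i hi := h.eq_var i (hi.trans_le hk)
  le_of_mem i hi v hv := by
    rcases lt_or_ge i k with hik | hik
    · rw [h.eq_var i hik, Tm.varList, List.mem_singleton] at hv
      exact hv ▸ hi
    · exact hk.trans (h.le_of_mem i hik v hv)

theorem tail (h : FixingReduction I k ts c b) :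
    SeqReduction I (fun j => c (k + j)) (fun j => b (k + j)) := by
  have hge (j : ℕ) : ∀ v ∈ (ts (k + j)).varList, v ∈ Set.Ici k := h.le_of_mem _ (k.le_add_right j)
  refine ⟨fun j => (ts (k + j)).subst fun v => .var (v - k),
    ⟨fun j => (h.admissible.1 _).subst_var (Nat.strictMonoOn_sub_Ici k) (hge j), fun j => ?_⟩,
    fun j => (h.eq_realize _).trans (Tm.realize_subst_sub I b (hge j)).symm⟩
  exact (h.admissible.2 _).subst_var (Nat.strictMonoOn_sub_Ici k) (hge j) (hge (j + 1))

variable [IsEmpty (F 0)]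

theorem comp {ts' : ℕ → Tm F} (h : FixingReduction I k ts c b)
    (h' : FixingReduction I k ts' d c) : FixingReduction I k (fun i => (ts' i).subst ts) d b where
  admissible := h.admissible.subst h'.admissible
  eq_realize i := by
    rw [h'.eq_realize, Tm.realize_subst]
    exact Tm.realize_congr I fun v _ => h.eq_realize v
  eq_var i hi := by rw [h'.eq_var i hi]; exact h.eq_var i hi
  le_of_mem i hi v hv := by
    obtain ⟨w, hw, hv⟩ := List.mem_flatMap.1 (Tm.varList_subst ts (ts' i) ▸ hv)
    exact h.le_of_mem w (h'.le_of_mem i hi w hw) v hv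

theorem splice {e : ℕ → A} (he : SeqReduction I e fun j => b (k + j)) :
    ∃ ts, FixingReduction I k ts (fun i => if i < k then b i else e (i - k)) b := by
  obtain ⟨ss, hss, he⟩ := he
  have hadd : StrictMonoOn (k + ·) Set.univ := fun _ _ _ _ h => Nat.add_lt_add_left h k
  let ts : ℕ → Tm F := fun i => if i < k then .var i else (ss (i - k)).subst fun v => .var (k + v)
  refine ⟨ts, ⟨fun i => ?_, fun i => ?_⟩, fun i => ?_, fun i hi => if_pos hi, fun i hi v hv => ?_⟩
  · unfold ts
    split_ifs
    · exact Tm.orderly_var i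
    · exact (hss.1 _).subst_var hadd fun _ _ => trivial
  · by_cases hi : i + 1 < k
    · simp only [ts, if_pos hi, if_pos (Nat.lt_of_succ_lt hi)]
      exact ⟨i, i + 1, rfl, rfl, i.lt_add_one⟩
    by_cases hi' : i < k
    · simp only [ts, if_pos hi', if_neg hi]
      refine Tm.termLT_of_forall fun x hx y hy => ?_
      rw [Tm.varList_subst_var, List.mem_map] at hy
      obtain ⟨w, -, rfl⟩ := hy
      rw [Tm.varList, List.mem_singleton] at hx
      omega
    · simp only [ts, if_neg hi, if_neg hi', Nat.sub_add_comm (not_lt.1 hi')]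
      exact (hss.2 _).subst_var hadd (fun _ _ => trivial) fun _ _ => trivial
  · simp only [ts]
    split_ifs
    · rfl
    · rw [he, Tm.realize_subst]
      rfl
  · simp only [ts, if_neg (not_lt.2 hi), Tm.varList_subst_var, List.mem_map] at hv
    obtain ⟨w, -, rfl⟩ := hv
    exact Nat.le_add_right k w

theorem iterSubst {σ : ℕ → ℕ → Tm F} {c : ℕ → ℕ → A}
    (h : ∀ k, FixingReduction I k (σ k) (c (k + 1)) (c k)) (m j : ℕ) :
    FixingReduction I m (Tm.iterSubst σ m j) (c (m + j)) (c m) := by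
  induction j with
  | zero => exact id m (c m)
  | succ j ih => exact ih.comp ((h (m + j)).mono (m.le_add_right j))

/-- Entry `i` is never changed after stage `i + 1`, so the diagonal sequence is a fixing
reduction of every stage. -/
theorem diag {σ : ℕ → ℕ → Tm F} {c : ℕ → ℕ → A}
    (h : ∀ k, FixingReduction I k (σ k) (c (k + 1)) (c k)) (m : ℕ) :
    FixingReduction I m (fun i => Tm.iterSubst σ m (i + 1) i) (fun i => c (i + 1) i) (c m) := by
  have hT := iterSubst h m
  have stable (i : ℕ) : Tm.iterSubst σ m (i + 2) i = Tm.iterSubst σ m (i + 1) i := by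
    change (σ (m + (i + 1)) i).subst _ = _
    rw [(h _).eq_var i (by omega)]
    rfl
  refine ⟨⟨fun i => (hT (i + 1)).admissible.1 i, fun i => ?_⟩, fun i => ?_,
    fun i hi => (hT (i + 1)).eq_var i hi, fun i hi => (hT (i + 1)).le_of_mem i hi⟩
  · change Tm.TermLT (Tm.iterSubst σ m (i + 1) i) _
    rw [← stable]
    exact (hT (i + 2)).admissible.2 i
  · rw [← (hT (i + 1)).eq_realize, Nat.add_comm m]
    exact ((iterSubst h (i + 1) m).eq_of_lt i.lt_add_one).symm

end FixingReduction

namespace Tm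

variable {F : ℕ → Type u} [IsEmpty (F 0)] [IsEmpty (F 1)]

theorem length_varList_lt_func {n : ℕ} (f : F n) (ts : Fin n → Tm F) (j : Fin n) :
    (ts j).varList.length < (func f ts).varList.length := by
  obtain _ | _ | n := n
  · exact isEmptyElim f
  · exact isEmptyElim f
  obtain ⟨j', hj'⟩ := exists_ne j
  have hpos := List.length_pos_of_ne_nil (varList_ne_nil (ts j'))
  classical
  calc (ts j).varList.length < (ts j).varList.length + (ts j').varList.length := by omega
    _ = ∑ i ∈ {j, j'}, (ts i).varList.length :=
      (Finset.sum_pair (f := fun i => (ts i).varList.length) hj'.symm).symm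
    _ ≤ ∑ i, (ts i).varList.length := Finset.sum_le_sum_of_subset (Finset.subset_univ _)
    _ = (func f ts).varList.length := by rw [Fin.sum_univ_def, varList, List.length_flatMap]

variable [Finite (Σ n, F n)]

theorem finite_setOf_length_varList_le (k N : ℕ) :
    {t : Tm F | t.varList.length ≤ N ∧ ∀ v ∈ t.varList, v < k}.Finite := by
  induction N with
  | zero =>
    refine Set.finite_empty.subset fun t ht => ?_
    have := List.length_pos_of_ne_nil (varList_ne_nil t)
    exact absurd ht.1 (by omega)
  | succ N ih =>
    have := ih.to_subtype
    let mk : Fin k ⊕ (Σ p : Σ n, F n,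
        Fin p.1 → {t : Tm F | t.varList.length ≤ N ∧ ∀ v ∈ t.varList, v < k}) → Tm F :=
      Sum.elim (fun i => var i) fun q => func q.1.2 fun j => q.2 j
    refine (Set.finite_range mk).subset ?_
    rintro (i | ⟨f, ts⟩) ⟨hlen, hlt⟩
    · exact ⟨Sum.inl ⟨i, hlt i (List.mem_singleton_self i)⟩, rfl⟩
    · refine ⟨Sum.inr ⟨⟨_, f⟩, fun j =>
        ⟨ts j, ?_, fun v hv => hlt v (mem_varList_func.2 ⟨j, hv⟩)⟩⟩, rfl⟩
      have := length_varList_lt_func f ts j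
      omega

theorem finite_setOf_orderly_lt (k : ℕ) :
    {t : Tm F | t.Orderly ∧ ∀ v ∈ t.varList, v < k}.Finite := by
  refine (finite_setOf_length_varList_le k k).subset fun t ⟨ht, hlt⟩ => ⟨?_, hlt⟩
  have hnodup : t.varList.Nodup := (orderly_iff_pairwise.1 ht).imp ne_of_lt
  simpa using
    (hnodup.subperm (l₂ := List.range k) fun v hv => List.mem_range.2 (hlt v hv)).length_le

end Tm

section Homogeneity

variable {F : ℕ → Type u} {A : Type v} (I : ∀ n, F n → (Fin n → A) → A)

def IsTupleHomogeneous (n : ℕ) (c : ℕ → A) (X : Set (Fin n → A)) : Prop :=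
  FRtuple I n c ⊆ X ∨ FRtuple I n c ∩ X = ∅

def TupleRamseyBelow (a : ℕ → A) (n : ℕ) : Prop :=
  ∀ b, SeqReduction I b a → ∀ X : Set (Fin n → A),
    ∃ c, SeqReduction I c b ∧ IsTupleHomogeneous I n c X

def TailsHomogeneous (n : ℕ) (c : ℕ → A) (X : Set (Fin (n + 1) → A)) : Prop :=
  ∀ (k : ℕ) (s : Tm F), s.Orderly → (∀ v ∈ s.varList, v < k) →
    IsTupleHomogeneous I n (fun j => c (k + j)) {y | Fin.cons (s.realize I c) y ∈ X}

variable {I} {n : ℕ}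

theorem tupleRamseyBelow_zero (a : ℕ → A) : TupleRamseyBelow I a 0 := by
  intro b _ X
  refine ⟨b, seqReduction_refl b, ?_⟩
  rcases X.eq_empty_or_nonempty with rfl | hX
  · exact Or.inr (Set.inter_empty _)
  · exact Or.inl (hX.eq_univ ▸ Set.subset_univ _)

variable [IsEmpty (F 0)]

theorem IsTupleHomogeneous.of_seqReduction {c d : ℕ → A} {X : Set (Fin n → A)}
    (h : IsTupleHomogeneous I n d X) (hcd : SeqReduction I c d) : IsTupleHomogeneous I n c X := by
  refine h.imp hcd.FRtuple_subset.trans fun hd => ?_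
  rw [← Set.subset_empty_iff, ← hd]
  exact Set.inter_subset_inter_left X hcd.FRtuple_subset

theorem IsTupleHomogeneous.subset_of_tail_subset {c : ℕ → A} {k k' : ℕ} {Y : Set (Fin n → A)}
    (h : IsTupleHomogeneous I n (fun j => c (k + j)) Y)
    (h' : FRtuple I n (fun j => c (k' + j)) ⊆ Y) : FRtuple I n (fun j => c (k + j)) ⊆ Y := by
  refine h.resolve_right fun hdisj => ?_
  obtain ⟨y, hy⟩ := FRtuple_nonempty (I := I) n fun j => c (max k k' + j)
  exact Set.eq_empty_iff_forall_notMem.1 hdisj y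
    ⟨(seqReduction_shift_of_le c (le_max_left k k')).FRtuple_subset hy,
      h' ((seqReduction_shift_of_le c (le_max_right k k')).FRtuple_subset hy)⟩

theorem exists_split_of_mem_FRtuple_succ {c : ℕ → A} {x : Fin (n + 1) → A}
    (hx : x ∈ FRtuple I (n + 1) c) :
    ∃ (k : ℕ) (s : Tm F), s.Orderly ∧ (∀ v ∈ s.varList, v < k) ∧ x 0 = s.realize I c ∧
      Fin.tail x ∈ FRtuple I n fun j => c (k + j) := by
  obtain ⟨t, ht, hxt⟩ := hx
  set k := (t 0).varList.getLast (Tm.varList_ne_nil _) + 1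
  have hlt : ∀ v ∈ (t 0).varList, v < k := fun v hv =>
    Nat.lt_succ_of_le (((Tm.orderly_iff_pairwise.1 (ht.1 0)).imp le_of_lt).rel_getLast hv)
  have hge (i : Fin n) : ∀ v ∈ (t i.succ).varList, v ∈ Set.Ici k := fun v hv =>
    (ht.2 0 i.succ i.succ_pos).lt_of_mem (ht.1 0) (ht.1 _) (List.getLast_mem _) hv
  have hsub := Nat.strictMonoOn_sub_Ici k
  refine ⟨k, t 0, ht.1 0, hlt, hxt 0, fun i => (t i.succ).subst fun v => .var (v - k),
    ⟨fun i => (ht.1 _).subst_var hsub (hge i), fun i j hij =>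
      (ht.2 _ _ (Fin.succ_lt_succ_iff.2 hij)).subst_var hsub (hge i) (hge j)⟩,
    fun i => (hxt i.succ).trans (Tm.realize_subst_sub I c (hge i)).symm⟩

theorem RamseyBelow.exists_homogeneous_of_tailsHomogeneous {a c : ℕ → A}
    (hR : RamseyBelow I a) (hc : SeqReduction I c a) {X : Set (Fin (n + 1) → A)}
    (hX : TailsHomogeneous I n c X) :
    ∃ c', SeqReduction I c' c ∧ IsTupleHomogeneous I (n + 1) c' X := by
  obtain ⟨c', hc'c, hc'⟩ :=
    hR c hc {x | ∃ k, FRtuple I n (fun j => c (k + j)) ⊆ {y | Fin.cons x y ∈ X}}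
  refine ⟨c', hc'c, ?_⟩
  have split (x) (hx : x ∈ FRtuple I (n + 1) c') : x 0 ∈ FR I c' ∧ ∃ k,
      IsTupleHomogeneous I n (fun j => c (k + j)) {y | Fin.cons (x 0) y ∈ X} ∧
      Fin.tail x ∈ FRtuple I n fun j => c (k + j) := by
    obtain ⟨k, s, hs, hlt, hx0, htail⟩ :=
      exists_split_of_mem_FRtuple_succ (hc'c.FRtuple_subset hx)
    exact ⟨mem_FR_of_mem_FRtuple hx 0, k, hx0 ▸ hX k s hs hlt, htail⟩
  rcases hc' with hgood | hbad
  · refine Or.inl fun x hx => ?_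
    obtain ⟨hx0, k, hk, htail⟩ := split x hx
    obtain ⟨k', hk'⟩ := hgood hx0
    rw [← Fin.cons_self_tail x]
    exact hk.subset_of_tail_subset hk' htail
  · refine Or.inr (Set.eq_empty_iff_forall_notMem.2 fun x ⟨hx, hxX⟩ => ?_)
    obtain ⟨hx0, k, hk | hk, htail⟩ := split x hx
    · exact Set.eq_empty_iff_forall_notMem.1 hbad (x 0) ⟨hx0, k, hk⟩
    · exact Set.eq_empty_iff_forall_notMem.1 hk _
        ⟨htail, show Fin.cons (x 0) (Fin.tail x) ∈ X by rwa [Fin.cons_self_tail]⟩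

theorem TupleRamseyBelow.exists_forall_homogeneous {a : ℕ → A} (h : TupleRamseyBelow I a n)
    {S : Set (Set (Fin n → A))} (hS : S.Finite) {b : ℕ → A} (hb : SeqReduction I b a) :
    ∃ c, SeqReduction I c b ∧ ∀ X ∈ S, IsTupleHomogeneous I n c X := by
  induction S, hS using Set.Finite.induction_on generalizing b with
  | empty => exact ⟨b, seqReduction_refl b, fun _ h => h.elim⟩
  | @insert X S _ _ ih =>
    obtain ⟨c, hcb, hc⟩ := h b hb X
    obtain ⟨d, hdc, hd⟩ := ih (hcb.trans hb)
    exact ⟨d, hdc.trans hcb, Set.forall_mem_insert.2 ⟨hc.of_seqReduction hdc, hd⟩⟩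

variable [IsEmpty (F 1)] [Finite (Σ n, F n)]

theorem TupleRamseyBelow.exists_fixingReduction_homogeneous {a : ℕ → A}
    (h : TupleRamseyBelow I a n) (X : Set (Fin (n + 1) → A)) (k : ℕ) {d : ℕ → A}
    (hd : SeqReduction I d a) :
    ∃ d' ts, FixingReduction I k ts d' d ∧ ∀ s : Tm F, s.Orderly → (∀ v ∈ s.varList, v < k) →
      IsTupleHomogeneous I n (fun j => d' (k + j)) {y | Fin.cons (s.realize I d) y ∈ X} := by
  obtain ⟨e, he, hhom⟩ := h.exists_forall_homogeneous
    ((Tm.finite_setOf_orderly_lt k).image fun s => {y | Fin.cons (s.realize I d) y ∈ X})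
    ((seqReduction_shift d k).trans hd)
  obtain ⟨ts, hts⟩ := FixingReduction.splice he
  refine ⟨_, ts, hts, fun s hs hlt => ?_⟩
  convert hhom _ ⟨s, ⟨hs, hlt⟩, rfl⟩ using 2
  simp

theorem TupleRamseyBelow.exists_tailsHomogeneous {a : ℕ → A} (h : TupleRamseyBelow I a n)
    {b : ℕ → A} (hb : SeqReduction I b a) (X : Set (Fin (n + 1) → A)) :
    ∃ c, SeqReduction I c b ∧ TailsHomogeneous I n c X := by
  choose next σ hσ hhom using fun k (d : {d // SeqReduction I d a}) =>
    h.exists_fixingReduction_homogeneous X k d.2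
  let chain : ℕ → {d // SeqReduction I d a} := fun k =>
    Nat.rec ⟨b, hb⟩ (fun k d => ⟨next k d, (hσ k d).seqReduction.trans d.2⟩) k
  have hchain (k : ℕ) : FixingReduction I k (σ k (chain k)) (chain (k + 1)).1 (chain k).1 :=
    hσ k (chain k)
  have hdiag := FixingReduction.diag (c := fun k => (chain k).1) hchain
  refine ⟨_, (hdiag 0).seqReduction, fun k s hs hlt => ?_⟩
  rw [Tm.realize_congr I fun v hv => ((hdiag (k + 1)).eq_of_lt (Nat.lt_succ_of_lt (hlt v hv))).trans
    ((hchain k).eq_of_lt (hlt v hv))]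
  exact (hhom k (chain k) s hs hlt).of_seqReduction ((hdiag (k + 1)).mono k.le_succ).tail

theorem TupleRamseyBelow.succ {a : ℕ → A}
    (hR : RamseyBelow I a) (h : TupleRamseyBelow I a n) : TupleRamseyBelow I a (n + 1) := by
  intro b hb X
  obtain ⟨c, hcb, hc⟩ := h.exists_tailsHomogeneous hb X
  obtain ⟨c', hc'c, hc'⟩ := hR.exists_homogeneous_of_tailsHomogeneous (hcb.trans hb) hc
  exact ⟨c', hc'c.trans hcb, hc'⟩

end Homogeneity

/-- If `(A, I)` is Ramsey below `a`, then for every `b ≤ a`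
and every `X ⊆ Aⁿ` there is `c ≤ b` with `[FR(c)]ⁿ_<` contained in or disjoint
from `X`. -/
theorem milliken_taylor_below {F : ℕ → Type u} {A : Type v}
    [IsEmpty (F 0)] [IsEmpty (F 1)] [Finite (Σ n, F n)]
    (I : ∀ n, F n → (Fin n → A) → A) (a : ℕ → A) (n : ℕ)
    (hR : RamseyBelow I a) :
    ∀ b, SeqReduction I b a → ∀ X : Set (Fin n → A),
      ∃ c, SeqReduction I c b ∧ (FRtuple I n c ⊆ X ∨ FRtuple I n c ∩ X = ∅) := by
  induction n with
  | zero => exact tupleRamseyBelow_zero a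
  | succ n ih => exact TupleRamseyBelow.succ hR ih
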